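/- Fix positive constants Δ^f, Δ^e, Δ^l, Δ^g and J > 0. For every k > 0 there exists a unique r > 1 satisfying k(Δ^e k + Δ^g J)/(Δ^f k + Δ^l J) = J r(r−1)/(Δ^f r + Δ^e)·(Δ^l + Δ^g ln(r/(r−1))), and the resulting map k ↦ r(k) is strictly increasing. -/

import Mathlib

/-!
Both sides of the condition are strictly increasing: the left side in `k` by a direct
factorisation, the right side in `r` because it factors as
`J r / (Δf r + Δe) * (Δl (r - 1) + Δg (r - 1) log (r / (r - 1)))` with both factors positive and
increasing. The monotonicity of `(r - 1) log (r / (r - 1))` is the strict concavity of `log`,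
evaluated at the convex combination `r / (r - 1)` of `s / (s - 1)` and `1`. The right side tends to
`0` as `r → 1⁺` (since `(r - 1) log (r / (r - 1)) = (r - 1) log r + negMulLog (r - 1)` is
continuous at `1`) and to `∞` as `r → ∞`, so by the intermediate value theorem it is a bijection
from `(1, ∞)` onto `(0, ∞)`, which contains the range of the left side.
-/

open Real Set Filter Topology

theorem strictMonoOn_sub_one_mul_log_div_sub_one :
    StrictMonoOn (fun r : ℝ => (r - 1) * log (r / (r - 1))) (Ioi 1) := by
  intro s hs r hr hsr
  simp only [mem_Ioi] at hs hr
  have hs1 : 0 < s - 1 := by linarith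
  have hr1 : 0 < r - 1 := by linarith
  have hconc := strictConcaveOn_log_Ioi.2 (mem_Ioi.2 (by positivity : 0 < s / (s - 1)))
    (mem_Ioi.2 one_pos) (by rw [ne_eq, div_eq_one_iff_eq hs1.ne']; linarith)
    (by positivity : 0 < (s - 1) / (r - 1)) (div_pos (by linarith : 0 < r - s) hr1)
    (by field_simp; ring)
  have hmid :
      ((s - 1) / (r - 1)) • (s / (s - 1)) + ((r - s) / (r - 1)) • (1 : ℝ) = r / (r - 1) := by
    simp only [smul_eq_mul]; field_simp; ring
  rw [hmid, log_one, smul_zero, add_zero, smul_eq_mul, div_mul_eq_mul_div,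
    div_lt_iff₀ hr1] at hconc
  simpa only [mul_comm] using hconc

theorem tendsto_sub_one_mul_log_div_sub_one :
    Tendsto (fun r : ℝ => (r - 1) * log (r / (r - 1))) (𝓝[>] 1) (𝓝 0) := by
  have hcont : Tendsto (fun r : ℝ => (r - 1) * log r + negMulLog (r - 1)) (𝓝 1) (𝓝 0) := by
    have : ContinuousAt (fun r : ℝ => (r - 1) * log r + negMulLog (r - 1)) 1 := by
      fun_prop (disch := norm_num)
    simpa using this.tendsto
  refine (hcont.mono_left nhdsWithin_le_nhds).congr' ?_
  filter_upwards [self_mem_nhdsWithin] with r (hr : 1 < r)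
  rw [log_div (by linarith) (by linarith), negMulLog]
  ring

theorem sub_one_mul_log_div_sub_one_pos {r : ℝ} (hr : 1 < r) : 0 < (r - 1) * log (r / (r - 1)) :=
  mul_pos (by linarith) (log_pos ((one_lt_div (by linarith)).2 (by linarith)))

noncomputable def optimalityLhs (Δf Δe Δl Δg J k : ℝ) : ℝ :=
  k * (Δe * k + Δg * J) / (Δf * k + Δl * J)

noncomputable def optimalityRhs (Δf Δe Δl Δg J r : ℝ) : ℝ :=
  J * (r * (r - 1)) / (Δf * r + Δe) * (Δl + Δg * log (r / (r - 1)))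

section
variable {Δf Δe Δl Δg J : ℝ}

theorem optimalityLhs_pos (hf : 0 < Δf) (he : 0 < Δe) (hl : 0 < Δl) (hg : 0 < Δg) (hJ : 0 < J)
    {k : ℝ} (hk : 0 < k) : 0 < optimalityLhs Δf Δe Δl Δg J k := by
  unfold optimalityLhs
  positivity

theorem optimalityLhs_strictMonoOn (hf : 0 < Δf) (he : 0 < Δe) (hl : 0 < Δl) (hg : 0 < Δg)
    (hJ : 0 < J) : StrictMonoOn (optimalityLhs Δf Δe Δl Δg J) (Ioi 0) := by
  intro k₁ (hk₁ : 0 < k₁) k₂ (hk₂ : 0 < k₂) hk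
  unfold optimalityLhs
  rw [div_lt_div_iff₀ (by positivity) (by positivity), ← sub_pos]
  have hfactor : k₂ * (Δe * k₂ + Δg * J) * (Δf * k₁ + Δl * J) -
      k₁ * (Δe * k₁ + Δg * J) * (Δf * k₂ + Δl * J) =
      (k₂ - k₁) * (Δe * Δf * k₁ * k₂ + Δe * Δl * J * (k₁ + k₂) + Δg * Δl * J ^ 2) := by
    ring
  rw [hfactor]
  have : 0 < k₂ - k₁ := sub_pos.2 hk
  positivity

theorem optimalityRhs_eq_mul (r : ℝ) : optimalityRhs Δf Δe Δl Δg J r =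
    J * r / (Δf * r + Δe) * (Δl * (r - 1) + Δg * ((r - 1) * log (r / (r - 1)))) := by
  unfold optimalityRhs
  ring

theorem optimalityRhs_strictMonoOn (hf : 0 < Δf) (he : 0 < Δe) (hl : 0 < Δl) (hg : 0 < Δg)
    (hJ : 0 < J) : StrictMonoOn (optimalityRhs Δf Δe Δl Δg J) (Ioi 1) := by
  intro s (hs : 1 < s) r (hr : 1 < r) hsr
  simp only [optimalityRhs_eq_mul]
  have hψ := strictMonoOn_sub_one_mul_log_div_sub_one (mem_Ioi.2 hs) (mem_Ioi.2 hr) hsr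
  have hψ_pos := sub_one_mul_log_div_sub_one_pos hs
  have hfrac : J * s / (Δf * s + Δe) < J * r / (Δf * r + Δe) := by
    rw [div_lt_div_iff₀ (by positivity) (by positivity)]
    nlinarith [mul_pos hJ he]
  refine mul_lt_mul'' hfrac ?_ (by positivity) ?_
  · dsimp only at hψ
    nlinarith [mul_lt_mul_of_pos_left hψ hg]
  · nlinarith [mul_pos hg hψ_pos]

theorem optimalityRhs_continuousOn (hf : 0 < Δf) (he : 0 < Δe) :
    ContinuousOn (optimalityRhs Δf Δe Δl Δg J) (Ioi 1) := by
  intro r (hr : 1 < r)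
  have : r - 1 ≠ 0 := by linarith
  have : Δf * r + Δe ≠ 0 := by positivity
  have : r / (r - 1) ≠ 0 := div_ne_zero (by linarith) (by linarith)
  unfold optimalityRhs
  exact ContinuousAt.continuousWithinAt (by fun_prop (disch := assumption))

theorem tendsto_optimalityRhs_nhdsGT_one (hf : 0 < Δf) (he : 0 < Δe) :
    Tendsto (optimalityRhs Δf Δe Δl Δg J) (𝓝[>] 1) (𝓝 0) := by
  simp only [funext optimalityRhs_eq_mul]
  have hfrac : Tendsto (fun r : ℝ => J * r / (Δf * r + Δe)) (𝓝[>] 1)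
      (𝓝 (J * 1 / (Δf * 1 + Δe))) := by
    refine (ContinuousAt.tendsto ?_).mono_left nhdsWithin_le_nhds
    have : Δf * 1 + Δe ≠ 0 := by positivity
    fun_prop (disch := assumption)
  have hlin : Tendsto (fun r : ℝ => r - 1) (𝓝[>] 1) (𝓝 0) :=
    (tendsto_nhdsWithin_of_tendsto_nhds (tendsto_id.sub_const 1)).trans (by simp)
  simpa using hfrac.mul ((hlin.const_mul Δl).add
    (tendsto_sub_one_mul_log_div_sub_one.const_mul Δg))

theorem tendsto_optimalityRhs_atTop (hf : 0 < Δf) (he : 0 < Δe) (hl : 0 < Δl) (hg : 0 < Δg)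
    (hJ : 0 < J) : Tendsto (optimalityRhs Δf Δe Δl Δg J) atTop atTop := by
  simp only [funext optimalityRhs_eq_mul]
  have hc : 0 < J * Δl / (Δf + Δe) := by positivity
  have hlin : Tendsto (fun r : ℝ => r - 1) atTop atTop := by
    simpa only [sub_eq_add_neg, id_eq] using tendsto_atTop_add_const_right atTop (-1 : ℝ) tendsto_id
  refine tendsto_atTop_mono' _ ?_ (hlin.const_mul_atTop hc)
  filter_upwards [eventually_gt_atTop 1] with r hr
  have hfrac : J / (Δf + Δe) ≤ J * r / (Δf * r + Δe) := by
    rw [div_le_div_iff₀ (by positivity) (by positivity)]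
    nlinarith [mul_pos hJ he]
  have hψ := sub_one_mul_log_div_sub_one_pos hr
  calc J * Δl / (Δf + Δe) * (r - 1) = J / (Δf + Δe) * (Δl * (r - 1)) := by ring
    _ ≤ J * r / (Δf * r + Δe) * (Δl * (r - 1)) :=
        mul_le_mul_of_nonneg_right hfrac (by nlinarith)
    _ ≤ _ := by
        gcongr
        nlinarith [mul_pos hg hψ]

theorem optimalityRhs_surjOn (hf : 0 < Δf) (he : 0 < Δe) (hl : 0 < Δl) (hg : 0 < Δg)
    (hJ : 0 < J) : SurjOn (optimalityRhs Δf Δe Δl Δg J) (Ioi 1) (Ioi 0) :=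
  isPreconnected_Ioi.intermediate_value_Ioi (l₁ := 𝓝[>] 1) inf_le_right
    (le_principal_iff.2 (Ioi_mem_atTop 1))
    (optimalityRhs_continuousOn hf he) (tendsto_optimalityRhs_nhdsGT_one hf he)
    (tendsto_optimalityRhs_atTop hf he hl hg hJ)

end

/-- For every `k > 0` the optimality condition (Eq. 5) has a unique solution
`r > 1`, and the implicit map `k ↦ r(k)` is strictly increasing. -/
theorem optimality_condition_implicit_function (Δf Δe Δl Δg J : ℝ)
    (hf : 0 < Δf) (he : 0 < Δe) (hl : 0 < Δl) (hg : 0 < Δg) (hJ : 0 < J) :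
    (∀ k : ℝ, 0 < k → ∃! r : ℝ, 1 < r ∧
      k * (Δe * k + Δg * J) / (Δf * k + Δl * J) =
        J * (r * (r - 1)) / (Δf * r + Δe) * (Δl + Δg * Real.log (r / (r - 1)))) ∧
    (∀ k₁ k₂ r₁ r₂ : ℝ, 0 < k₁ → k₁ < k₂ → 1 < r₁ → 1 < r₂ →
      k₁ * (Δe * k₁ + Δg * J) / (Δf * k₁ + Δl * J) =
        J * (r₁ * (r₁ - 1)) / (Δf * r₁ + Δe) * (Δl + Δg * Real.log (r₁ / (r₁ - 1))) →
      k₂ * (Δe * k₂ + Δg * J) / (Δf * k₂ + Δl * J) =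
        J * (r₂ * (r₂ - 1)) / (Δf * r₂ + Δe) * (Δl + Δg * Real.log (r₂ / (r₂ - 1))) →
      r₁ < r₂) := by
  have hrhs := optimalityRhs_strictMonoOn hf he hl hg hJ
  refine ⟨fun k hk => ?_, fun k₁ k₂ r₁ r₂ hk₁ hk hr₁ hr₂ h₁ h₂ => ?_⟩
  · obtain ⟨r, hr, hrk⟩ :=
      optimalityRhs_surjOn hf he hl hg hJ (optimalityLhs_pos hf he hl hg hJ hk)
    exact ⟨r, ⟨hr, hrk.symm⟩, fun r' ⟨hr', hr'k⟩ => hrhs.injOn hr' hr (hr'k.symm.trans hrk.symm)⟩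
  · have hlhs := optimalityLhs_strictMonoOn hf he hl hg hJ hk₁ (hk₁.trans hk) hk
    rw [optimalityLhs, optimalityLhs, h₁, h₂] at hlhs
    exact (hrhs.lt_iff_lt hr₁ hr₂).1 hlhs
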